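/- Let F be a finite field, V a 2-dimensional F-vector space, q : V → F a non-degenerate anisotropic quadratic form, and a ∈ F with a ≠ 0. Then diam(G_{q,a}) ≤ 3; in particular G_{q,a} is connected. -/

import Mathlib

open QuadraticMap Module

/-- The representation graph `G_{q,a}`: vertices are the vectors of `V`, and distinct
`x, y` are adjacent iff `q (x - y) = a`. -/
def repGraph {F V : Type*} [Field F] [AddCommGroup V] [Module F V]
    (q : QuadraticForm F V) (a : F) : SimpleGraph V where
  Adj x y := x ≠ y ∧ q (x - y) = a
  symm := by
    constructor; rintro x y ⟨hxy, h⟩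
    refine ⟨hxy.symm, ?_⟩
    rw [← neg_sub x y, QuadraticMap.map_neg]
    exact h
  loopless := by constructor; rintro x ⟨h, -⟩; exact h rfl

/-!
Let `S = {q = a}`. Over a finite field an anisotropic binary form takes every nonzero value
exactly `|F| + 1` times (stereographic projection from a point of the level set), and a line meets
a level set in at most two points. Reflections act transitively on each level set, so `S + S` is
a union of level sets; as the `(|F| + 1)|F|` pairs in `S × S` with nonzero sum have at least
`(|F| + 1)|F| / 2` distinct sums, `q` takes at least `|F| / 2` nonzero values on `S + S`. For
`w ∉ S` the values `q (w - s)`, `s ∈ S`, are at least `(|F| + 1) / 2` nonzero values, so one of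
them is taken on `S + S`, i.e. `w ∈ S + S + S`: any two vertices are joined by a walk of length 3.
-/

open Finset
open scoped Pointwise

namespace QuadraticForm

section CommRing

variable {R M : Type*} [CommRing R] [AddCommGroup M] [Module R M] (q : QuadraticForm R M)

theorem map_sub_eq (x y : M) : q (x - y) = q x + q y - polar q x y := by
  rw [sub_eq_add_neg, QuadraticMap.map_add q, polar_neg_right, QuadraticMap.map_neg, sub_eq_add_neg]

theorem map_add_smul_eq_self_iff [NoZeroDivisors R] (u d : M) (c : R) :
    q (u + c • d) = q u ↔ c = 0 ∨ c * q d + polar q u d = 0 := by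
  rw [QuadraticMap.map_add q, QuadraticMap.map_smul, polar_smul_right, smul_eq_mul, smul_eq_mul,
    ← mul_eq_zero, add_assoc, add_eq_left]
  constructor <;> intro h <;> linear_combination h

end CommRing

variable {F V : Type*} [Field F] [AddCommGroup V] [Module F V] {q : QuadraticForm F V}

theorem exists_isometryEquiv_apply_eq (hq : q.Anisotropic) {w₁ w₂ : V} (h : q w₁ = q w₂) :
    ∃ σ : q.IsometryEquiv q, σ w₁ = w₂ := by
  rcases eq_or_ne w₁ w₂ with rfl | hne
  · exact ⟨.refl q, rfl⟩
  set z := w₁ - w₂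
  have hz : q z ≠ 0 := fun h => hne (sub_eq_zero.mp (hq _ h))
  let f : Module.Dual F V := (q z)⁻¹ • polarBilin q z
  have hf (x : V) : f x = polar q z x / q z := by simp [f, div_eq_inv_mul]
  have hfz : f z = 2 := by rw [hf, polar_self, two_nsmul, ← two_mul, mul_div_cancel_right₀ _ hz]
  let ρ := Module.reflection hfz
  have hρ (x : V) : q (ρ x) = q x := by
    rw [Module.reflection_apply, map_sub_eq, QuadraticMap.map_smul, polar_smul_right, hf,
      polar_comm q x z, smul_eq_mul, smul_eq_mul]
    field_simp
    ring
  refine ⟨{ ρ with map_app' := hρ }, ?_⟩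
  show ρ w₁ = w₂
  have : f w₁ = 1 := by
    rw [hf, div_eq_one_iff_eq hz, polar_sub_left, polar_self, map_sub_eq, h, polar_comm]
    ring
  rw [Module.reflection_apply, this, one_smul, sub_sub_cancel]

def sphere [Fintype V] [DecidableEq F] (q : QuadraticForm F V) (t : F) : Finset V :=
  {v | q v = t}

@[simp]
theorem mem_sphere [Fintype V] [DecidableEq F] {t : F} {v : V} : v ∈ sphere q t ↔ q v = t := by
  simp [sphere]

theorem sphere_zero [Fintype V] [DecidableEq F] (hq : q.Anisotropic) : sphere q 0 = {0} := by
  ext v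
  simp [hq.eq_zero_iff]

theorem mem_sphere_add_sphere_of_map_eq [Fintype V] [DecidableEq F] [DecidableEq V]
    (hq : q.Anisotropic) {a : F} {w₁ w₂ : V} (hw₁ : w₁ ∈ sphere q a + sphere q a)
    (h : q w₁ = q w₂) : w₂ ∈ sphere q a + sphere q a := by
  obtain ⟨σ, rfl⟩ := exists_isometryEquiv_apply_eq hq h
  obtain ⟨s, hs, u, hu, rfl⟩ := mem_add.mp hw₁
  exact mem_add.mpr ⟨σ s, by simpa using hs, σ u, by simpa using hu, (map_add σ s u).symm⟩

theorem eq_of_smul_add_smul_eq {u₀ e z : V} (he : polar q u₀ e ≠ 0) (hz : z ≠ 0)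
    (hu₀z : polar q u₀ z = 0) {c₁ c₂ s₁ s₂ : F} (hc₂ : c₂ ≠ 0)
    (h : c₁ • (e + s₁ • z) = c₂ • (e + s₂ • z)) : s₁ = s₂ := by
  have hpol (c s : F) : polar q u₀ (c • (e + s • z)) = c * polar q u₀ e := by
    rw [polar_smul_right, polar_add_right, polar_smul_right, hu₀z, smul_zero, add_zero,
      smul_eq_mul]
  obtain rfl : c₁ = c₂ := mul_right_cancel₀ he (by rw [← hpol c₁ s₁, ← hpol c₂ s₂, h])
  exact smul_left_injective F hz (add_left_cancel (smul_right_injective V hc₂ h))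

section Plane

variable (hdim : finrank F V = 2) (hnd : (polarBilin q).SeparatingLeft)
include hdim hnd

theorem finrank_ker_polarBilin {w : V} (hw : w ≠ 0) :
    finrank F (LinearMap.ker (polarBilin q w)) = 1 := by
  have : FiniteDimensional F V := .of_finrank_pos (by omega)
  have hne : polarBilin q w ≠ 0 := fun h => hw (hnd w fun y => by rw [h]; rfl)
  have := Module.Dual.finrank_ker_add_one_of_ne_zero hne
  omega

theorem exists_ne_zero_polar_eq_zero {w : V} (hw : w ≠ 0) : ∃ z ≠ 0, polar q w z = 0 := by
  have : FiniteDimensional F V := .of_finrank_pos (by omega)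
  obtain ⟨⟨z, hz⟩, hz0⟩ := finrank_pos_iff_exists_ne_zero.mp
    (finrank_ker_polarBilin hdim hnd hw ▸ one_pos)
  exact ⟨z, fun h => hz0 (Subtype.ext h), hz⟩

theorem exists_smul_eq_of_polar_eq_zero {w z v : V} (hw : w ≠ 0) (hz : z ≠ 0)
    (hwz : polar q w z = 0) (hwv : polar q w v = 0) : ∃ c : F, c • z = v := by
  obtain ⟨c, hc⟩ := (finrank_eq_one_iff_of_nonzero'
    (⟨z, hwz⟩ : LinearMap.ker (polarBilin q w)) (fun h => hz (congrArg Subtype.val h))).mp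
    (finrank_ker_polarBilin hdim hnd hw) ⟨v, hwv⟩
  exact ⟨c, congrArg Subtype.val hc⟩

theorem card_filter_polar_le_two [Fintype V] [DecidableEq F] (hq : q.Anisotropic) {w : V}
    (hw : w ≠ 0) (t r : F) : #{u | q u = t ∧ polar q w u = r} ≤ 2 := by
  by_contra! h
  obtain ⟨u₁, u₂, u₃, h₁, h₂, h₃, h₁₂, h₁₃, h₂₃⟩ := two_lt_card_iff.mp h
  simp only [mem_filter, mem_univ, true_and] at h₁ h₂ h₃
  have hz : u₂ - u₁ ≠ 0 := sub_ne_zero.mpr h₁₂.symm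
  obtain ⟨c, hc⟩ := exists_smul_eq_of_polar_eq_zero hdim hnd hw hz
    (by rw [polar_sub_right, h₁.2, h₂.2, sub_self]) (v := u₃ - u₁)
    (by rw [polar_sub_right, h₁.2, h₃.2, sub_self])
  have h₂' := (map_add_smul_eq_self_iff q u₁ (u₂ - u₁) 1).mp (by simp [h₁.1, h₂.1])
  have h₃' := (map_add_smul_eq_self_iff q u₁ (u₂ - u₁) c).mp (by simp [hc, h₁.1, h₃.1])
  simp only [one_ne_zero, one_mul, false_or] at h₂'
  have hqz : q (u₂ - u₁) ≠ 0 := fun h => hz (hq _ h)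
  rcases h₃' with rfl | h₃'
  · exact h₁₃ (by simpa [sub_eq_zero, eq_comm] using hc)
  · obtain rfl : c = 1 := mul_left_cancel₀ hqz (by linear_combination h₃' - h₂')
    exact h₂₃ (by simpa using hc)

theorem exists_smul_add_smul_eq {w e z : V} (hw : w ≠ 0) (he : polar q w e ≠ 0) (hz : z ≠ 0)
    (hwz : polar q w z = 0) (v : V) : ∃ x y : F, x • e + y • z = v := by
  obtain ⟨y, hy⟩ := exists_smul_eq_of_polar_eq_zero hdim hnd hw hz hwz
    (v := v - (polar q w v / polar q w e) • e)
    (by rw [polar_sub_right, polar_smul_right, smul_eq_mul, div_mul_cancel₀ _ he, sub_self])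
  exact ⟨_, y, by rw [hy, add_sub_cancel]⟩

theorem exists_eq_add_smul_of_map_eq (hq : q.Anisotropic) {u₀ e z v : V} (hu₀ : u₀ ≠ 0)
    (he : polar q u₀ e ≠ 0) (hz : z ≠ 0) (hu₀z : polar q u₀ z = 0) (hv : q v = q u₀)
    (hvu : v ≠ u₀) : ∃ x s : F, x ≠ 0 ∧ v = u₀ + x • (e + s • z) := by
  obtain ⟨x, y, hxy⟩ := exists_smul_add_smul_eq hdim hnd hu₀ he hz hu₀z (v - u₀)
  have hx : x ≠ 0 := by
    rintro rfl
    rw [zero_smul, zero_add] at hxy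
    have := (map_add_smul_eq_self_iff q u₀ z y).mp (by rw [hxy, add_sub_cancel, hv])
    have hy : y = 0 := by simpa [hu₀z, hq.eq_zero_iff, hz] using this
    exact hvu (by rwa [hy, zero_smul, eq_comm, sub_eq_zero] at hxy)
  exact ⟨x, y / x, hx, by rw [smul_add, smul_smul, mul_div_cancel₀ _ hx, hxy, add_sub_cancel]⟩

theorem card_filter_sub_le_two [Fintype V] [DecidableEq F] (hq : q.Anisotropic) {a : F} {w : V}
    (hw : w ≠ 0) (t : F) :
    #{s ∈ sphere q a | q (w - s) = t} ≤ 2 := by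
  refine (card_le_card fun s => ?_).trans
    (card_filter_polar_le_two hdim hnd hq hw a (q w + a - t))
  simp only [mem_filter, mem_sphere, mem_univ, true_and, map_sub_eq]
  rintro ⟨rfl, rfl⟩
  exact ⟨rfl, by ring⟩

end Plane

section Count

variable [Fintype F] [Fintype V] [DecidableEq F] [DecidableEq V]
  (hdim : finrank F V = 2) (hnd : (polarBilin q).SeparatingLeft) (hq : q.Anisotropic)
include hdim hnd hq

theorem card_sphere_of_mem {u₀ : V} (hu₀ : u₀ ≠ 0) :
    #(sphere q (q u₀)) = Fintype.card F + 1 := by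
  obtain ⟨e, he⟩ : ∃ e, polar q u₀ e ≠ 0 := by
    by_contra! h
    exact hu₀ (hnd u₀ h)
  obtain ⟨z, hz, hu₀z⟩ := exists_ne_zero_polar_eq_zero hdim hnd hu₀
  set p := polar q u₀ e
  -- `φ s` is the second intersection of the sphere with the line through `u₀` in direction
  -- `d s`; these lines are exactly the non-tangent ones
  let d : F → V := fun s => e + s • z
  have hpd (s : F) : polar q u₀ (d s) = p := by
    rw [polar_add_right, polar_smul_right, hu₀z, smul_zero, add_zero]
  have hqd (s : F) : q (d s) ≠ 0 := fun h => he (by rw [← hpd s, hq _ h, polar_zero_right])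
  let c : F → F := fun s => -p / q (d s)
  have hc (s : F) : c s * q (d s) + p = 0 := by simp [c, div_mul_cancel₀ _ (hqd s)]
  have hc0 (s : F) : c s ≠ 0 := div_ne_zero (neg_ne_zero.mpr he) (hqd s)
  let φ : F → V := fun s => u₀ + c s • d s
  have hφ : Function.Injective φ := fun s₁ s₂ h =>
    eq_of_smul_add_smul_eq he hz hu₀z (hc0 s₂) (add_left_cancel h)
  have hu₀φ : u₀ ∉ univ.image φ := by
    simp only [mem_image, mem_univ, true_and, not_exists, φ, add_eq_left, smul_eq_zero, not_or]
    exact fun s => ⟨hc0 s, fun h => hqd s (by rw [h, map_zero])⟩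
  have hsphere : sphere q (q u₀) = insert u₀ (univ.image φ) := by
    ext v
    simp only [mem_sphere, mem_insert, mem_image, mem_univ, true_and]
    constructor
    · intro hv
      refine or_iff_not_imp_left.mpr fun hvu => ?_
      obtain ⟨x, s, hx, rfl⟩ :=
        exists_eq_add_smul_of_map_eq hdim hnd hq hu₀ he hz hu₀z hv hvu
      have hline := ((map_add_smul_eq_self_iff q u₀ (d s) x).mp hv).resolve_left hx
      rw [hpd] at hline
      have hcx : c s = x := mul_right_cancel₀ (hqd s) (by linear_combination hc s - hline)
      exact ⟨s, by simp only [φ, d, hcx]⟩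
    · rintro (rfl | ⟨s, rfl⟩)
      · rfl
      · exact (map_add_smul_eq_self_iff q u₀ (d s) (c s)).mpr (Or.inr (by rw [hpd]; exact hc s))
  rw [hsphere, card_insert_of_notMem hu₀φ, card_image_of_injective _ hφ, card_univ]

theorem card_sphere_le {t : F} (ht : t ≠ 0) : #(sphere q t) ≤ Fintype.card F + 1 := by
  rcases (sphere q t).eq_empty_or_nonempty with h | ⟨u, hu⟩
  · simp [h]
  · rw [mem_sphere] at hu
    subst hu
    exact (card_sphere_of_mem hdim hnd hq fun h => ht (by rw [h, map_zero])).le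

theorem sphere_nonempty {t : F} (ht : t ≠ 0) : (sphere q t).Nonempty := by
  rw [nonempty_iff_ne_empty]
  intro hempty
  obtain ⟨g, hg⟩ : ∃ g, Fintype.card F = g + 2 :=
    Nat.exists_eq_add_of_le' (Fintype.one_lt_card (α := F))
  have hV : (g + 2) ^ 2 = ∑ s, #(sphere q s) := by
    rw [← hg, ← hdim, ← Module.card_eq_pow_finrank, ← card_univ]
    exact card_eq_sum_card_fiberwise fun _ _ => mem_univ _
  have hrest : ∑ s ∈ (univ.erase 0).erase t, #(sphere q s) ≤ g * (g + 3) := by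
    calc _ ≤ ∑ _s ∈ (univ.erase (0 : F)).erase t, (g + 3) :=
          sum_le_sum fun s hs =>
            (card_sphere_le hdim hnd hq (ne_of_mem_erase (mem_of_mem_erase hs))).trans_eq (by omega)
      _ = g * (g + 3) := by
          rw [sum_const, card_erase_of_mem (mem_erase.mpr ⟨ht, mem_univ t⟩),
            card_erase_of_mem (mem_univ 0), card_univ, hg, smul_eq_mul,
            show g + 2 - 1 - 1 = g by omega]
  rw [← add_sum_erase _ _ (mem_univ 0),
    ← add_sum_erase _ _ (mem_erase.mpr ⟨ht, mem_univ t⟩), sphere_zero hq, hempty,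
    card_singleton, card_empty] at hV
  nlinarith

theorem card_sphere {t : F} (ht : t ≠ 0) : #(sphere q t) = Fintype.card F + 1 := by
  obtain ⟨u, hu⟩ := sphere_nonempty hdim hnd hq ht
  rw [mem_sphere] at hu
  subst hu
  exact card_sphere_of_mem hdim hnd hq fun h => ht (by rw [h, map_zero])

theorem card_le_two_mul_card_image_sphere_add_sphere {a : F} (ha : a ≠ 0) :
    Fintype.card F ≤ 2 * #(((sphere q a + sphere q a).erase 0).image q) := by
  set S := sphere q a
  set T := (S + S).erase 0
  set P := (S ×ˢ S).filter fun p => p.1 + p.2 ≠ 0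
  have hS : #S = Fintype.card F + 1 := card_sphere hdim hnd hq ha
  have hP : #(S ×ˢ S) ≤ #P + #S := by
    calc #(S ×ˢ S) ≤ #(P ∪ S.image fun s => (s, -s)) := card_le_card fun p hp => by
          by_cases h : p.1 + p.2 = 0
          · refine mem_union_right _ (mem_image.mpr ⟨p.1, (mem_product.mp hp).1, ?_⟩)
            rw [← eq_neg_of_add_eq_zero_right h]
          · exact mem_union_left _ (mem_filter.mpr ⟨hp, h⟩)
      _ ≤ #P + #S := (card_union_le _ _).trans (by gcongr; exact card_image_le)
  have hPT : #P ≤ 2 * #T := by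
    refine card_le_mul_card_image_of_maps_to (f := fun p => p.1 + p.2) ?_ 2 fun w hw => ?_
    · intro p hp
      obtain ⟨hp, hp0⟩ := mem_filter.mp hp
      exact mem_erase.mpr ⟨hp0, add_mem_add (mem_product.mp hp).1 (mem_product.mp hp).2⟩
    · refine (card_le_card_of_injOn Prod.fst (t := {s ∈ S | q (w - s) = a}) ?_ ?_).trans
        (card_filter_sub_le_two hdim hnd hq (ne_of_mem_erase hw) a)
      · intro p hp
        simp only [mem_coe, P, mem_filter, mem_product] at hp ⊢
        obtain ⟨⟨⟨hp₁, hp₂⟩, -⟩, rfl⟩ := hp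
        simpa [hp₁] using mem_sphere.mp hp₂
      · intro p hp p' hp' h
        simp only [mem_coe, mem_filter] at hp hp'
        exact Prod.ext h (add_left_cancel (h ▸ hp.2.trans hp'.2.symm))
  have hTG : #T ≤ (Fintype.card F + 1) * #(T.image q) := by
    refine card_le_mul_card_image T _ fun t ht => ?_
    obtain ⟨v, hv, rfl⟩ := mem_image.mp ht
    refine (card_le_card fun u hu => ?_).trans
      (card_sphere_le hdim hnd hq fun h => ne_of_mem_erase hv (hq v h))
    exact mem_sphere.mpr (mem_filter.mp hu).2
  rw [card_product, hS] at hP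
  nlinarith

theorem exists_mem_sphere_sub_mem_sphere_add_sphere {a : F} (ha : a ≠ 0) {w : V} (hw : w ≠ 0) :
    ∃ s ∈ sphere q a, w - s ∈ sphere q a + sphere q a := by
  by_cases hwa : q w = a
  · obtain ⟨u, hu⟩ := sphere_nonempty hdim hnd hq ha
    refine ⟨w, mem_sphere.mpr hwa, ?_⟩
    rw [sub_self]
    exact mem_add.mpr ⟨u, hu, -u, by simpa using hu, add_neg_cancel u⟩
  by_contra! hnot
  have hG := card_le_two_mul_card_image_sphere_add_sphere hdim hnd hq ha
  have hB := card_le_mul_card_image (f := fun s => q (w - s)) (sphere q a) 2 fun t _ =>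
    card_filter_sub_le_two hdim hnd hq hw t
  set G := ((sphere q a + sphere q a).erase 0).image q
  set B := (sphere q a).image fun s => q (w - s)
  have hdisj : Disjoint B G := by
    refine disjoint_left.mpr fun t htB htG => ?_
    obtain ⟨s, hs, rfl⟩ := mem_image.mp htB
    obtain ⟨v, hv, hvs⟩ := mem_image.mp htG
    exact hnot s hs (mem_sphere_add_sphere_of_map_eq hq (mem_of_mem_erase hv) hvs)
  have hBG : B ∪ G ⊆ univ.erase 0 := by
    intro t ht
    refine mem_erase.mpr ⟨?_, mem_univ t⟩
    rcases mem_union.mp ht with ht | ht <;> obtain ⟨v, hv, rfl⟩ := mem_image.mp ht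
    · exact fun h => hwa (by rw [← mem_sphere.mp hv, sub_eq_zero.mp (hq _ h)])
    · exact fun h => ne_of_mem_erase hv (hq v h)
  have := card_le_card hBG
  rw [card_union_of_disjoint hdisj, card_erase_of_mem (mem_univ 0), card_univ] at this
  rw [card_sphere hdim hnd hq ha] at hB
  omega

theorem mem_sphere_add_sphere_add_sphere {a : F} (ha : a ≠ 0) {w : V} (hw : w ≠ 0) :
    w ∈ sphere q a + sphere q a + sphere q a := by
  obtain ⟨s, hs, hws⟩ := exists_mem_sphere_sub_mem_sphere_add_sphere hdim hnd hq ha hw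
  rw [add_assoc]
  exact mem_add.mpr ⟨s, hs, w - s, hws, add_sub_cancel s w⟩

end Count

end QuadraticForm

theorem repGraph_adj_add {F V : Type*} [Field F] [AddCommGroup V] [Module F V]
    {q : QuadraticForm F V} {a : F} (ha : a ≠ 0) (x : V) {s : V} (hs : q s = a) :
    (repGraph q a).Adj x (x + s) := by
  refine ⟨fun h => ha ?_, by rw [sub_add_cancel_left, QuadraticMap.map_neg, hs]⟩
  rw [← hs, left_eq_add.mp h, map_zero]

open QuadraticForm in
theorem edist_repGraph_le_three {F V : Type*} [Field F] [Fintype F] [AddCommGroup V] [Module F V]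
    {q : QuadraticForm F V} (hdim : finrank F V = 2) (hnd : (polarBilin q).SeparatingLeft)
    (hq : q.Anisotropic) {a : F} (ha : a ≠ 0) (x y : V) : (repGraph q a).edist x y ≤ 3 := by
  classical
  have : FiniteDimensional F V := .of_finrank_pos (by omega)
  have : Finite V := Module.finite_of_finite F
  have := Fintype.ofFinite V
  rcases eq_or_ne x y with rfl | hxy
  · simp
  obtain ⟨_, hsu, r, hr, h⟩ :=
    mem_add.mp (mem_sphere_add_sphere_add_sphere hdim hnd hq ha (sub_ne_zero.mpr hxy.symm))
  obtain ⟨s, hs, u, hu, rfl⟩ := mem_add.mp hsu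
  obtain rfl : y = x + s + u + r := by rw [add_assoc, add_assoc, ← add_assoc s, h, add_sub_cancel]
  exact (SimpleGraph.edist_le (.cons (repGraph_adj_add ha x (mem_sphere.mp hs))
    (.cons (repGraph_adj_add ha _ (mem_sphere.mp hu))
    (.cons (repGraph_adj_add ha _ (mem_sphere.mp hr)) .nil)))).trans_eq rfl

/-- Over a finite field, a 2-dimensional non-degenerate anisotropic form `q` and `a ≠ 0`
yield `diam G_{q,a} ≤ 3`; in particular `G_{q,a}` is connected. -/
theorem stmt_13 {F V : Type*} [Field F] [Fintype F]
    [AddCommGroup V] [Module F V]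
    (q : QuadraticForm F V) (hdim : Module.finrank F V = 2)
    (hnd : ∀ x : V, (∀ y : V, polar (⇑q) x y = 0) → x = 0)
    (haniso : ∀ v : V, q v = 0 → v = 0)
    (a : F) (ha : a ≠ 0) :
    (repGraph q a).ediam ≤ 3 ∧ (repGraph q a).Connected := by
  have hdiam := SimpleGraph.ediam_le_of_edist_le (edist_repGraph_le_three hdim hnd haniso ha)
  exact ⟨hdiam, SimpleGraph.connected_of_ediam_ne_top (ne_top_of_le_ne_top (by decide) hdiam)⟩
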